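/- Let G be a finite group acting on a commutative ring O over a base ring R, with |G| invertible in R. Suppose A → B is a surjection of R-algebras with kernel I satisfying I² = 0, ρ : R → A is a ring homomorphism, and φ : O → B is a G-invariant R-algebra homomorphism (where G acts trivially on B). If there exists some (not necessarily invariant) R-algebra homomorphism ψ : O → A lifting φ, then there exists a G-invariant R-algebra homomorphism ψ' : O → A lifting φ. -/

import Mathlib

/-!
Two algebra maps `ψ₁, ψ₂ : O → A` that agree modulo a square-zero ideal `I` differ by a
`ψ₂`-derivation `ψ₁ - ψ₂ : O → I`, and conversely `ψ + D` is again an algebra map for every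
`ψ`-derivation `D` into `I`. Since derivations form a module, the lifts of a fixed map modulo `I`
are closed under affine combinations. For a lift `ψ` of a `G`-invariant `φ`, all the translates
`ψ ∘ σ` are lifts, so their average `|G|⁻¹ ∑ σ, ψ ∘ σ` is a lift as well, and it is `G`-invariant.
-/

open Finset

namespace AlgHom

variable {R O A : Type*} [CommSemiring R] [Semiring O] [Ring A] [Algebra R O] [Algebra R A]

def addOfLeibniz (ψ : O →ₐ[R] A) (D : O →ₗ[R] A) (hsq : ∀ x y, D x * D y = 0)
    (hD : ∀ x y, D (x * y) = ψ x * D y + D x * ψ y) : O →ₐ[R] A :=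
  ofLinearMap (ψ.toLinearMap + D)
    (by
      have h1 : D 1 = 0 := by simpa using hD 1 1
      simp [h1])
    (fun x y => by
      simp only [LinearMap.add_apply, coe_toLinearMap, hD, map_mul, mul_add, add_mul, hsq]
      abel)

theorem addOfLeibniz_apply (ψ : O →ₐ[R] A) (D : O →ₗ[R] A) (hsq : ∀ x y, D x * D y = 0)
    (hD : ∀ x y, D (x * y) = ψ x * D y + D x * ψ y) (x : O) :
    ψ.addOfLeibniz D hsq hD x = ψ x + D x :=
  rfl

variable {I : Ideal A} {ι : Type*} [Fintype ι]

theorem sub_map_mul_of_sub_mem (hI : ∀ a ∈ I, ∀ b ∈ I, a * b = 0) {ψ₁ ψ₂ : O →ₐ[R] A}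
    (h : ∀ x, ψ₁ x - ψ₂ x ∈ I) (x y : O) :
    ψ₁ (x * y) - ψ₂ (x * y) = ψ₂ x * (ψ₁ y - ψ₂ y) + (ψ₁ x - ψ₂ x) * ψ₂ y := by
  have hxy := hI _ (h x) _ (h y)
  rw [map_mul, map_mul, ← sub_eq_zero, ← hxy]
  noncomm_ring

theorem smul_sum_sub_mem {ψ : O →ₐ[R] A} {ψs : ι → O →ₐ[R] A} (h : ∀ i x, ψs i x - ψ x ∈ I)
    (c : R) (x : O) : c • ∑ i, (ψs i x - ψ x) ∈ I :=
  Submodule.smul_of_tower_mem _ c (sum_mem fun i _ => h i x)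

theorem smul_sum_sub_map_mul (hI : ∀ a ∈ I, ∀ b ∈ I, a * b = 0) {ψ : O →ₐ[R] A}
    {ψs : ι → O →ₐ[R] A} (h : ∀ i x, ψs i x - ψ x ∈ I) (c : R) (x y : O) :
    c • ∑ i, (ψs i (x * y) - ψ (x * y)) =
      ψ x * c • ∑ i, (ψs i y - ψ y) + (c • ∑ i, (ψs i x - ψ x)) * ψ y := by
  simp only [sub_map_mul_of_sub_mem hI (h _), sum_add_distrib, ← mul_sum, ← sum_mul, smul_add,
    mul_smul_comm, smul_mul_assoc]

def addSmulSumSub (hI : ∀ a ∈ I, ∀ b ∈ I, a * b = 0) (ψ : O →ₐ[R] A) (ψs : ι → O →ₐ[R] A)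
    (h : ∀ i x, ψs i x - ψ x ∈ I) (c : R) : O →ₐ[R] A :=
  have hD : ∀ x, (c • ∑ i, ((ψs i).toLinearMap - ψ.toLinearMap)) x = c • ∑ i, (ψs i x - ψ x) :=
    fun x => by simp [LinearMap.sum_apply]
  ψ.addOfLeibniz (c • ∑ i, ((ψs i).toLinearMap - ψ.toLinearMap))
    (fun x y => by
      simpa only [hD] using hI _ (smul_sum_sub_mem h c x) _ (smul_sum_sub_mem h c y))
    (fun x y => by simpa only [hD] using smul_sum_sub_map_mul hI h c x y)

theorem addSmulSumSub_apply (hI : ∀ a ∈ I, ∀ b ∈ I, a * b = 0) (ψ : O →ₐ[R] A)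
    (ψs : ι → O →ₐ[R] A) (h : ∀ i x, ψs i x - ψ x ∈ I) (c : R) (x : O) :
    ψ.addSmulSumSub hI ψs h c x = ψ x + c • ∑ i, (ψs i x - ψ x) := by
  simp [addSmulSumSub, addOfLeibniz_apply, LinearMap.sum_apply]

theorem addSmulSumSub_sub_mem (hI : ∀ a ∈ I, ∀ b ∈ I, a * b = 0) (ψ : O →ₐ[R] A)
    (ψs : ι → O →ₐ[R] A) (h : ∀ i x, ψs i x - ψ x ∈ I) (c : R) (x : O) :
    ψ.addSmulSumSub hI ψs h c x - ψ x ∈ I := by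
  simpa [addSmulSumSub_apply] using smul_sum_sub_mem h c x

variable {G : Type*} [Group G] [Fintype G] [MulSemiringAction G O] [SMulCommClass G R O]

def orbitAverage (hI : ∀ a ∈ I, ∀ b ∈ I, a * b = 0) (ψ : O →ₐ[R] A)
    (h : ∀ (σ : G) x, ψ (σ • x) - ψ x ∈ I) (u : R) : O →ₐ[R] A :=
  ψ.addSmulSumSub hI (fun σ => ψ.comp (MulSemiringAction.toAlgHom R O σ)) h u

theorem orbitAverage_apply (hI : ∀ a ∈ I, ∀ b ∈ I, a * b = 0) (ψ : O →ₐ[R] A)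
    (h : ∀ (σ : G) x, ψ (σ • x) - ψ x ∈ I) {u : R} (hu : u * Fintype.card G = 1) (x : O) :
    ψ.orbitAverage hI h u x = u • ∑ σ : G, ψ (σ • x) := by
  refine (addSmulSumSub_apply hI ψ _ h u x).trans ?_
  rw [sum_sub_distrib, smul_sub, sum_const, card_univ, ← Nat.cast_smul_eq_nsmul R, smul_smul, hu,
    one_smul, add_sub_cancel]
  rfl

theorem orbitAverage_smul (hI : ∀ a ∈ I, ∀ b ∈ I, a * b = 0) (ψ : O →ₐ[R] A)
    (h : ∀ (σ : G) x, ψ (σ • x) - ψ x ∈ I) {u : R} (hu : u * Fintype.card G = 1) (τ : G)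
    (x : O) : ψ.orbitAverage hI h u (τ • x) = ψ.orbitAverage hI h u x := by
  simp only [orbitAverage_apply hI ψ h hu, smul_smul]
  congr 1
  exact Fintype.sum_equiv (Equiv.mulRight τ) _ _ fun _ => rfl

theorem orbitAverage_sub_mem (hI : ∀ a ∈ I, ∀ b ∈ I, a * b = 0) (ψ : O →ₐ[R] A)
    (h : ∀ (σ : G) x, ψ (σ • x) - ψ x ∈ I) (u : R) (x : O) : ψ.orbitAverage hI h u x - ψ x ∈ I :=
  addSmulSumSub_sub_mem hI ψ _ h u x

end AlgHom

theorem stmt_1_general (R O A B : Type) [CommRing R] [CommRing O] [CommRing A] [CommRing B]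
    [Algebra R O] [Algebra R A] [Algebra R B]
    (G : Type) [Group G] [Fintype G] [MulSemiringAction G O] [SMulCommClass G R O]
    (hcard : IsUnit ((Fintype.card G : R)))
    (π : A →ₐ[R] B)
    (hsq : ∀ x ∈ RingHom.ker (π : A →+* B), ∀ y ∈ RingHom.ker (π : A →+* B), x * y = 0)
    (φ : O →ₐ[R] B) (hφinv : ∀ (σ : G) (f : O), φ (σ • f) = φ f)
    (ψ : O →ₐ[R] A) (hlift : π.comp ψ = φ) :
    ∃ ψ' : O →ₐ[R] A, π.comp ψ' = φ ∧ ∀ (σ : G) (f : O), ψ' (σ • f) = ψ' f := by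
  have hπψ : ∀ f, π (ψ f) = φ f := DFunLike.congr_fun hlift
  have hψ : ∀ (σ : G) f, ψ (σ • f) - ψ f ∈ RingHom.ker (π : A →+* B) := fun σ f => by
    simp [hπψ, hφinv]
  have hu : ((hcard.unit⁻¹ : Rˣ) : R) * Fintype.card G = 1 := hcard.val_inv_mul
  refine ⟨ψ.orbitAverage hsq hψ _, ?_, ψ.orbitAverage_smul hsq hψ hu⟩
  ext f
  rw [← hlift]
  exact (RingHom.sub_mem_ker_iff _).mp (ψ.orbitAverage_sub_mem hsq hψ _ f)

/-- Let `G` be a finite group acting on a commutative ring `O` over a base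
ring `R`, with `|G|` invertible in `R`.  Suppose `π : A → B` is a surjection of `R`-algebras
whose kernel `I` satisfies `I² = 0`, and `φ : O → B` is a `G`-invariant `R`-algebra
homomorphism.  If there exists some (not necessarily invariant) `R`-algebra homomorphism
`ψ : O → A` lifting `φ`, then there exists a `G`-invariant `R`-algebra homomorphism
`ψ' : O → A` lifting `φ`. -/
theorem stmt_1 (R O A B : Type) [CommRing R] [CommRing O] [CommRing A] [CommRing B]
    [Algebra R O] [Algebra R A] [Algebra R B]
    (G : Type) [Group G] [Fintype G] [MulSemiringAction G O] [SMulCommClass G R O]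
    (hcard : IsUnit ((Fintype.card G : R)))
    (π : A →ₐ[R] B) (hπ : Function.Surjective π)
    (hsq : ∀ x ∈ RingHom.ker (π : A →+* B), ∀ y ∈ RingHom.ker (π : A →+* B), x * y = 0)
    (φ : O →ₐ[R] B) (hφinv : ∀ (σ : G) (f : O), φ (σ • f) = φ f)
    (ψ : O →ₐ[R] A) (hlift : π.comp ψ = φ) :
    ∃ ψ' : O →ₐ[R] A, π.comp ψ' = φ ∧ ∀ (σ : G) (f : O), ψ' (σ • f) = ψ' f :=
  stmt_1_general R O A B G hcard π hsq φ hφinv ψ hlift
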